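/- arXiv:2311.14097 — 6 statements merged into one kernel-verified Lean document; each statement's English description precedes it below -/
import Mathlib

section
/- Let (Ω, 𝔽, ℙ) be a probability space and E a real normed vector space with its Borel σ-algebra. Let n ≥ 1, let Y_0, Y_1, …, Y_n : Ω → E and Ŷ_0, …, Ŷ_{n−1} : Ω → E be random variables, let g : E → E be measurable, and let f_0, f_1, …, f_n : E → E each be L-Lipschitz (L > 0). Assume: (i) for each k = 1, …, n, g(Y_k(ω)) = g(Y_{k−1}(ω)) for ℙ-almost every ω; (ii) f_0(Y_0(ω)) = g(Y_0(ω)) for ℙ-almost every ω; (iii) all norms appearing below are ℙ-integrable. Then 𝔼[‖g(Y_n) − f_n(Y_n)‖] ≤ Σ_{k=1}^{n} ( 𝔼[‖f_k(Y_k) − f_{k−1}(Ŷ_{k−1})‖] + L · 𝔼[‖Y_{k−1} − Ŷ_{k−1}‖] ). -/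
open MeasureTheory Finset

theorem telescoped_consistency_bound
    {Ω E : Type*} [MeasurableSpace Ω] (ℙ : Measure Ω) [IsProbabilityMeasure ℙ]
    [NormedAddCommGroup E] [NormedSpace ℝ E] [MeasurableSpace E] [BorelSpace E]
    (n : ℕ) (hn : 1 ≤ n)
    (Y : ℕ → Ω → E) (Yhat : ℕ → Ω → E)
    (g : E → E) (hg : Measurable g)
    (f : ℕ → E → E)
    (L : ℝ) (hL : 0 < L)
    (hf : ∀ k ≤ n, ∀ x y : E, ‖f k x - f k y‖ ≤ L * ‖x - y‖)
    (hcons : ∀ k, 1 ≤ k → k ≤ n → ∀ᵐ ω ∂ℙ, g (Y k ω) = g (Y (k - 1) ω))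
    (hbase : ∀ᵐ ω ∂ℙ, f 0 (Y 0 ω) = g (Y 0 ω))
    (hint₀ : Integrable (fun ω => ‖g (Y n ω) - f n (Y n ω)‖) ℙ)
    (hint₁ : ∀ k, 1 ≤ k → k ≤ n →
      Integrable (fun ω => ‖f k (Y k ω) - f (k - 1) (Yhat (k - 1) ω)‖) ℙ)
    (hint₂ : ∀ k, 1 ≤ k → k ≤ n →
      Integrable (fun ω => ‖Y (k - 1) ω - Yhat (k - 1) ω‖) ℙ) :
    ∫ ω, ‖g (Y n ω) - f n (Y n ω)‖ ∂ℙ ≤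
      ∑ k ∈ Finset.Icc 1 n,
        ((∫ ω, ‖f k (Y k ω) - f (k - 1) (Yhat (k - 1) ω)‖ ∂ℙ)
          + L * ∫ ω, ‖Y (k - 1) ω - Yhat (k - 1) ω‖ ∂ℙ) := by
  -- the pointwise term
  set T : ℕ → Ω → ℝ := fun k ω =>
    ‖f k (Y k ω) - f (k - 1) (Yhat (k - 1) ω)‖ + L * ‖Y (k - 1) ω - Yhat (k - 1) ω‖ with hT
  have hTint : ∀ k ∈ Finset.Icc 1 n, Integrable (T k) ℙ := by
    intro k hk
    rw [Finset.mem_Icc] at hk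
    exact (hint₁ k hk.1 hk.2).add ((hint₂ k hk.1 hk.2).const_mul L)
  -- all chain conditions hold a.e. simultaneously
  have hchain : ∀ᵐ ω ∂ℙ, ∀ k ∈ (↑(Finset.Icc 1 n) : Set ℕ), g (Y k ω) = g (Y (k - 1) ω) := by
    rw [MeasureTheory.ae_ball_iff (Finset.Icc 1 n).countable_toSet]
    intro k hk
    rw [Finset.mem_coe, Finset.mem_Icc] at hk
    exact hcons k hk.1 hk.2
  -- pointwise a.e. bound
  have hptwise : ∀ᵐ ω ∂ℙ,
      ‖g (Y n ω) - f n (Y n ω)‖ ≤ ∑ k ∈ Finset.Icc 1 n, T k ω := by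
    filter_upwards [hchain, hbase] with ω hc hb
    have key : ∀ m ≤ n, ‖g (Y m ω) - f m (Y m ω)‖ ≤ ∑ k ∈ Finset.Icc 1 m, T k ω := by
      intro m hm
      induction m with
      | zero => simp [← hb]
      | succ m ih =>
        have hm' : m ≤ n := Nat.le_of_succ_le hm
        have ihm := ih hm'
        have hgc : g (Y (m + 1) ω) = g (Y m ω) := by
          have := hc (m + 1) (Finset.mem_coe.mpr (Finset.mem_Icc.mpr ⟨Nat.succ_le_succ (Nat.zero_le _), hm⟩))
          simpa using this
        have tri : ‖g (Y (m + 1) ω) - f (m + 1) (Y (m + 1) ω)‖ ≤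
            ‖f (m + 1) (Y (m + 1) ω) - f m (Yhat m ω)‖
            + ‖f m (Yhat m ω) - f m (Y m ω)‖
            + ‖g (Y m ω) - f m (Y m ω)‖ := by
          rw [hgc, norm_sub_rev]
          calc ‖f (m + 1) (Y (m + 1) ω) - g (Y m ω)‖
              = ‖(f (m + 1) (Y (m + 1) ω) - f m (Yhat m ω))
                  + (f m (Yhat m ω) - f m (Y m ω))
                  + -(g (Y m ω) - f m (Y m ω))‖ := by congr 1; abel
            _ ≤ ‖f (m + 1) (Y (m + 1) ω) - f m (Yhat m ω)‖
                + ‖f m (Yhat m ω) - f m (Y m ω)‖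
                + ‖-(g (Y m ω) - f m (Y m ω))‖ := norm_add₃_le
            _ = _ := by rw [norm_neg]
        have lip : ‖f m (Yhat m ω) - f m (Y m ω)‖ ≤ L * ‖Y m ω - Yhat m ω‖ := by
          rw [norm_sub_rev (Y m ω)]
          exact hf m hm' _ _
        have hsum : ∑ k ∈ Finset.Icc 1 (m + 1), T k ω
            = (∑ k ∈ Finset.Icc 1 m, T k ω) + T (m + 1) ω :=
          Finset.sum_Icc_succ_top (Nat.succ_le_succ (Nat.zero_le _)) _
        have hTm : T (m + 1) ω
            = ‖f (m + 1) (Y (m + 1) ω) - f m (Yhat m ω)‖ + L * ‖Y m ω - Yhat m ω‖ := by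
          simp [hT]
        rw [hsum, hTm]
        calc ‖g (Y (m + 1) ω) - f (m + 1) (Y (m + 1) ω)‖
            ≤ ‖f (m + 1) (Y (m + 1) ω) - f m (Yhat m ω)‖
              + ‖f m (Yhat m ω) - f m (Y m ω)‖
              + ‖g (Y m ω) - f m (Y m ω)‖ := tri
          _ ≤ ‖f (m + 1) (Y (m + 1) ω) - f m (Yhat m ω)‖
              + L * ‖Y m ω - Yhat m ω‖
              + ∑ k ∈ Finset.Icc 1 m, T k ω := by
                exact add_le_add (add_le_add le_rfl lip) ihm
          _ = _ := by ring
    exact key n le_rfl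
  calc ∫ ω, ‖g (Y n ω) - f n (Y n ω)‖ ∂ℙ
      ≤ ∫ ω, ∑ k ∈ Finset.Icc 1 n, T k ω ∂ℙ :=
        integral_mono_ae hint₀ (integrable_finset_sum _ hTint) hptwise
    _ = ∑ k ∈ Finset.Icc 1 n, ∫ ω, T k ω ∂ℙ := integral_finset_sum _ hTint
    _ = ∑ k ∈ Finset.Icc 1 n,
        ((∫ ω, ‖f k (Y k ω) - f (k - 1) (Yhat (k - 1) ω)‖ ∂ℙ)
          + L * ∫ ω, ‖Y (k - 1) ω - Yhat (k - 1) ω‖ ∂ℙ) := by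
        refine Finset.sum_congr rfl fun k hk => ?_
        rw [Finset.mem_Icc] at hk
        rw [hT]
        rw [integral_add (hint₁ k hk.1 hk.2) ((hint₂ k hk.1 hk.2).const_mul L),
          integral_const_mul]
end

section
/- Let (Ω, 𝔽, ℙ) be a probability space and E a real normed vector space with its Borel σ-algebra. Let n ≥ 1, let X, Y_0, Y_1, …, Y_n : Ω → E and Ŷ_0, …, Ŷ_{n−1} : Ω → E be random variables, let g : E → E be measurable, and let f_0, f_1, …, f_n : E → E each be L-Lipschitz (L > 0). Assume: (i) for each k = 1, …, n, g(Y_k(ω)) = g(Y_{k−1}(ω)) for ℙ-almost every ω; (ii) f_0(Y_0(ω)) = g(Y_0(ω)) for ℙ-almost every ω; (iii) all norms appearing below are ℙ-integrable. Then 𝔼[‖f_n(X) − g(Y_n)‖] ≤ L · 𝔼[‖X − Y_n‖] + Σ_{k=1}^{n} ( 𝔼[‖f_k(Y_k) − f_{k−1}(Ŷ_{k−1})‖] + L · 𝔼[‖Y_{k−1} − Ŷ_{k−1}‖] ). In particular, the infimum over couplings γ of the laws of f_n(X) and g(Y_n) of ∫ ‖a − b‖ dγ(a, b) is bounded above by the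 right-hand side. -/
open MeasureTheory Finset

theorem wasserstein_bound_consistency_training
    {Ω E : Type*} [MeasurableSpace Ω] (ℙ : Measure Ω) [IsProbabilityMeasure ℙ]
    [NormedAddCommGroup E] [NormedSpace ℝ E] [MeasurableSpace E] [BorelSpace E]
    (n : ℕ) (hn : 1 ≤ n)
    (X : Ω → E) (Y : ℕ → Ω → E) (Yhat : ℕ → Ω → E)
    (hX : Measurable X) (hY : ∀ k ≤ n, Measurable (Y k))
    (g : E → E) (hg : Measurable g)
    (f : ℕ → E → E)
    (L : ℝ) (hL : 0 < L)
    (hf : ∀ k ≤ n, ∀ x y : E, ‖f k x - f k y‖ ≤ L * ‖x - y‖)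
    (hfm : ∀ k ≤ n, Measurable (f k))
    (hcons : ∀ k, 1 ≤ k → k ≤ n → ∀ᵐ ω ∂ℙ, g (Y k ω) = g (Y (k - 1) ω))
    (hbase : ∀ᵐ ω ∂ℙ, f 0 (Y 0 ω) = g (Y 0 ω))
    (hint₀ : Integrable (fun ω => ‖f n (X ω) - g (Y n ω)‖) ℙ)
    (hintX : Integrable (fun ω => ‖X ω - Y n ω‖) ℙ)
    (hint₁ : ∀ k, 1 ≤ k → k ≤ n →
      Integrable (fun ω => ‖f k (Y k ω) - f (k - 1) (Yhat (k - 1) ω)‖) ℙ)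
    (hint₂ : ∀ k, 1 ≤ k → k ≤ n →
      Integrable (fun ω => ‖Y (k - 1) ω - Yhat (k - 1) ω‖) ℙ) :
    (∫ ω, ‖f n (X ω) - g (Y n ω)‖ ∂ℙ ≤
      L * (∫ ω, ‖X ω - Y n ω‖ ∂ℙ)
        + ∑ k ∈ Finset.Icc 1 n,
            ((∫ ω, ‖f k (Y k ω) - f (k - 1) (Yhat (k - 1) ω)‖ ∂ℙ)
              + L * ∫ ω, ‖Y (k - 1) ω - Yhat (k - 1) ω‖ ∂ℙ)) ∧
    ((⨅ γ : {m : Measure (E × E) //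
        m.map Prod.fst = ℙ.map (fun ω => f n (X ω)) ∧
        m.map Prod.snd = ℙ.map (fun ω => g (Y n ω))},
      ∫ a : E × E, ‖a.1 - a.2‖ ∂(γ : Measure (E × E))) ≤
      L * (∫ ω, ‖X ω - Y n ω‖ ∂ℙ)
        + ∑ k ∈ Finset.Icc 1 n,
            ((∫ ω, ‖f k (Y k ω) - f (k - 1) (Yhat (k - 1) ω)‖ ∂ℙ)
              + L * ∫ ω, ‖Y (k - 1) ω - Yhat (k - 1) ω‖ ∂ℙ)) := by
  -- Pointwise a.e. bound by induction
  have key : ∀ k, k ≤ n → ∀ᵐ ω ∂ℙ,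
      ‖f k (Y k ω) - g (Y k ω)‖ ≤ ∑ j ∈ Finset.Icc 1 k,
        (‖f j (Y j ω) - f (j-1) (Yhat (j-1) ω)‖ + L * ‖Y (j-1) ω - Yhat (j-1) ω‖) := by
    intro k
    induction k with
    | zero =>
      intro _
      filter_upwards [hbase] with ω h
      simp [h]
    | succ k ih =>
      intro hk
      have hk' : k ≤ n := Nat.le_of_succ_le hk
      filter_upwards [ih hk', hcons (k+1) (Nat.succ_le_succ (Nat.zero_le k)) hk] with ω h1 h2
      have hsplit : ∑ j ∈ Finset.Icc 1 (k+1),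
          (‖f j (Y j ω) - f (j-1) (Yhat (j-1) ω)‖ + L * ‖Y (j-1) ω - Yhat (j-1) ω‖)
          = (∑ j ∈ Finset.Icc 1 k,
          (‖f j (Y j ω) - f (j-1) (Yhat (j-1) ω)‖ + L * ‖Y (j-1) ω - Yhat (j-1) ω‖))
          + (‖f (k+1) (Y (k+1) ω) - f k (Yhat k ω)‖ + L * ‖Y k ω - Yhat k ω‖) := by
        rw [Finset.sum_Icc_succ_top (Nat.succ_le_succ (Nat.zero_le k))]
        simp
      have h2' : g (Y (k+1) ω) = g (Y k ω) := by simpa using h2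
      have tri : ‖f (k+1) (Y (k+1) ω) - g (Y (k+1) ω)‖ ≤
          ‖f (k+1) (Y (k+1) ω) - f k (Yhat k ω)‖ + ‖f k (Yhat k ω) - f k (Y k ω)‖
            + ‖f k (Y k ω) - g (Y k ω)‖ := by
        rw [h2']
        calc ‖f (k+1) (Y (k+1) ω) - g (Y k ω)‖
            ≤ ‖f (k+1) (Y (k+1) ω) - f k (Y k ω)‖ + ‖f k (Y k ω) - g (Y k ω)‖ :=
              norm_sub_le_norm_sub_add_norm_sub _ _ _
          _ ≤ ‖f (k+1) (Y (k+1) ω) - f k (Yhat k ω)‖ + ‖f k (Yhat k ω) - f k (Y k ω)‖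
              + ‖f k (Y k ω) - g (Y k ω)‖ := by
              have := norm_sub_le_norm_sub_add_norm_sub (f (k+1) (Y (k+1) ω)) (f k (Yhat k ω)) (f k (Y k ω))
              linarith
      have lip : ‖f k (Yhat k ω) - f k (Y k ω)‖ ≤ L * ‖Y k ω - Yhat k ω‖ := by
        have := hf k hk' (Yhat k ω) (Y k ω)
        rwa [norm_sub_rev (Yhat k ω)] at this
      rw [hsplit]
      linarith
  have hBC : ∀ k ∈ Finset.Icc 1 n, Integrable (fun ω =>
      ‖f k (Y k ω) - f (k-1) (Yhat (k-1) ω)‖ + L * ‖Y (k-1) ω - Yhat (k-1) ω‖) ℙ := by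
    intro k hk
    rw [Finset.mem_Icc] at hk
    exact (hint₁ k hk.1 hk.2).add ((hint₂ k hk.1 hk.2).const_mul L)
  have hRHSint : Integrable (fun ω => L * ‖X ω - Y n ω‖ + ∑ k ∈ Finset.Icc 1 n,
      (‖f k (Y k ω) - f (k-1) (Yhat (k-1) ω)‖ + L * ‖Y (k-1) ω - Yhat (k-1) ω‖)) ℙ :=
    (hintX.const_mul L).add (integrable_finset_sum _ hBC)
  have hpt : ∀ᵐ ω ∂ℙ, ‖f n (X ω) - g (Y n ω)‖ ≤ L * ‖X ω - Y n ω‖ + ∑ k ∈ Finset.Icc 1 n,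
      (‖f k (Y k ω) - f (k-1) (Yhat (k-1) ω)‖ + L * ‖Y (k-1) ω - Yhat (k-1) ω‖) := by
    filter_upwards [key n le_rfl] with ω h
    have tri := norm_sub_le_norm_sub_add_norm_sub (f n (X ω)) (f n (Y n ω)) (g (Y n ω))
    have lip := hf n le_rfl (X ω) (Y n ω)
    linarith
  have main : ∫ ω, ‖f n (X ω) - g (Y n ω)‖ ∂ℙ ≤
      L * (∫ ω, ‖X ω - Y n ω‖ ∂ℙ)
        + ∑ k ∈ Finset.Icc 1 n,
            ((∫ ω, ‖f k (Y k ω) - f (k - 1) (Yhat (k - 1) ω)‖ ∂ℙ)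
              + L * ∫ ω, ‖Y (k - 1) ω - Yhat (k - 1) ω‖ ∂ℙ) := by
    have h1 := integral_mono_ae hint₀ hRHSint hpt
    rw [integral_add (hintX.const_mul L) (integrable_finset_sum _ hBC),
      integral_const_mul, integral_finset_sum _ hBC] at h1
    refine h1.trans (le_of_eq ?_)
    congr 1
    refine Finset.sum_congr rfl fun k hk => ?_
    rw [Finset.mem_Icc] at hk
    rw [integral_add (hint₁ k hk.1 hk.2) ((hint₂ k hk.1 hk.2).const_mul L),
      integral_const_mul]
  refine ⟨main, ?_⟩
  -- the coupling part
  set RHS := L * (∫ ω, ‖X ω - Y n ω‖ ∂ℙ)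
        + ∑ k ∈ Finset.Icc 1 n,
            ((∫ ω, ‖f k (Y k ω) - f (k - 1) (Yhat (k - 1) ω)‖ ∂ℙ)
              + L * ∫ ω, ‖Y (k - 1) ω - Yhat (k - 1) ω‖ ∂ℙ) with hRHS
  have hRHSnonneg : 0 ≤ RHS := by
    have h0 : 0 ≤ ∫ ω, ‖f n (X ω) - g (Y n ω)‖ ∂ℙ :=
      integral_nonneg fun ω => norm_nonneg _
    linarith
  have hh : Measurable (fun ω => (f n (X ω), g (Y n ω))) :=
    ((hfm n le_rfl).comp hX).prodMk (hg.comp (hY n le_rfl))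
  set γ₀ : Measure (E × E) := ℙ.map (fun ω => (f n (X ω), g (Y n ω))) with hγ₀
  have hmem : γ₀.map Prod.fst = ℙ.map (fun ω => f n (X ω)) ∧
      γ₀.map Prod.snd = ℙ.map (fun ω => g (Y n ω)) := by
    constructor
    · rw [hγ₀, Measure.map_map measurable_fst hh]; rfl
    · rw [hγ₀, Measure.map_map measurable_snd hh]; rfl
  have hbdd : BddBelow (Set.range (fun γ : {m : Measure (E × E) //
        m.map Prod.fst = ℙ.map (fun ω => f n (X ω)) ∧
        m.map Prod.snd = ℙ.map (fun ω => g (Y n ω))} =>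
      ∫ a : E × E, ‖a.1 - a.2‖ ∂(γ : Measure (E × E)))) := by
    refine ⟨0, ?_⟩
    rintro x ⟨γ, rfl⟩
    exact integral_nonneg fun a => norm_nonneg _
  have hle : (∫ a : E × E, ‖a.1 - a.2‖ ∂γ₀) ≤ RHS := by
    by_cases hm : AEStronglyMeasurable (fun a : E × E => ‖a.1 - a.2‖) γ₀
    · rw [hγ₀, integral_map hh.aemeasurable (by rwa [hγ₀] at hm)]
      exact main
    · rw [integral_non_aestronglyMeasurable hm]
      exact hRHSnonneg
  exact le_trans (ciInf_le hbdd ⟨γ₀, hmem⟩) hle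
end

section
/- Let (α, 𝒜, μ) be a σ-finite measure space and let p, q : α → ℝ be measurable functions with p ≥ 0, q ≥ 0, and p(x) + q(x) > 0 for μ-almost every x. Let D : α → ℝ be measurable with 0 < D(x) < 1 for μ-almost every x. Assume the functions p·log D, q·log(1 − D), p·log(p/(p+q)), and q·log(q/(p+q)) are μ-integrable (with the convention that p(x)·log(p(x)/(p(x)+q(x))) = 0 whenever p(x) = 0, and similarly for q). Then ∫ p(x) log D(x) dμ(x) + ∫ q(x) log(1 − D(x)) dμ(x) ≤ ∫ p(x) log(p(x)/(p(x)+q(x))) dμ(x) + ∫ q(x) log(q(x)/(p(x)+q(x))) dμ(x). -/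
open MeasureTheory Real

lemma optimal_disc_pointwise (a b d : ℝ) (ha : 0 ≤ a) (hb : 0 ≤ b)
    (hab : 0 < a + b) (hd0 : 0 < d) (hd1 : d < 1) :
    a * Real.log d + b * Real.log (1 - d) ≤
      a * Real.log (a / (a + b)) + b * Real.log (b / (a + b)) := by
  have h1d : 0 < 1 - d := by linarith
  rcases ha.eq_or_lt with ha0 | ha0
  · have hb0 : 0 < b := by linarith [hab]; 
    rw [← ha0]
    simp only [zero_mul, zero_add]
    rw [div_self (ne_of_gt hb0), Real.log_one, mul_zero]
    exact mul_nonpos_of_nonneg_of_nonpos hb (Real.log_nonpos (by linarith) (by linarith))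
  rcases hb.eq_or_lt with hb0 | hb0
  · rw [← hb0]
    simp only [zero_mul, add_zero]
    rw [div_self (ne_of_gt ha0), Real.log_one, mul_zero]
    exact mul_nonpos_of_nonneg_of_nonpos ha (Real.log_nonpos (by linarith) (by linarith))
  -- both positive
  have key1 : a * Real.log d - a * Real.log (a / (a + b)) ≤ d * (a + b) - a := by
    have hx : 0 < d * (a + b) / a := by positivity
    have := Real.log_le_sub_one_of_pos hx
    have hlog : Real.log d - Real.log (a / (a + b)) = Real.log (d * (a + b) / a) := by
      rw [Real.log_div (by positivity) (by positivity), Real.log_div (by positivity) (by positivity),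
        Real.log_mul (ne_of_gt hd0) (ne_of_gt hab)]
      ring
    calc a * Real.log d - a * Real.log (a / (a + b))
        = a * (Real.log d - Real.log (a / (a + b))) := by ring
      _ = a * Real.log (d * (a + b) / a) := by rw [hlog]
      _ ≤ a * (d * (a + b) / a - 1) := mul_le_mul_of_nonneg_left this ha
      _ = d * (a + b) - a := by field_simp
  have key2 : b * Real.log (1 - d) - b * Real.log (b / (a + b)) ≤ (1 - d) * (a + b) - b := by
    have hx : 0 < (1 - d) * (a + b) / b := by positivity
    have := Real.log_le_sub_one_of_pos hx
    have hlog : Real.log (1 - d) - Real.log (b / (a + b)) = Real.log ((1 - d) * (a + b) / b) := by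
      rw [Real.log_div (by positivity) (by positivity), Real.log_div (by positivity) (by positivity),
        Real.log_mul (ne_of_gt h1d) (ne_of_gt hab)]
      ring
    calc b * Real.log (1 - d) - b * Real.log (b / (a + b))
        = b * (Real.log (1 - d) - Real.log (b / (a + b))) := by ring
      _ = b * Real.log ((1 - d) * (a + b) / b) := by rw [hlog]
      _ ≤ b * ((1 - d) * (a + b) / b - 1) := mul_le_mul_of_nonneg_left this hb
      _ = (1 - d) * (a + b) - b := by field_simp
  nlinarith [key1, key2]

theorem optimal_discriminator_integral
    {α : Type*} [MeasurableSpace α] (μ : Measure α) [SigmaFinite μ]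
    (p q D : α → ℝ)
    (hp : Measurable p) (hq : Measurable q) (hD : Measurable D)
    (hp0 : ∀ x, 0 ≤ p x) (hq0 : ∀ x, 0 ≤ q x)
    (hpq : ∀ᵐ x ∂μ, 0 < p x + q x)
    (hD01 : ∀ᵐ x ∂μ, 0 < D x ∧ D x < 1)
    (hint₁ : Integrable (fun x => p x * Real.log (D x)) μ)
    (hint₂ : Integrable (fun x => q x * Real.log (1 - D x)) μ)
    (hint₃ : Integrable (fun x => p x * Real.log (p x / (p x + q x))) μ)
    (hint₄ : Integrable (fun x => q x * Real.log (q x / (p x + q x))) μ) :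
    (∫ x, p x * Real.log (D x) ∂μ) + ∫ x, q x * Real.log (1 - D x) ∂μ ≤
      (∫ x, p x * Real.log (p x / (p x + q x)) ∂μ)
        + ∫ x, q x * Real.log (q x / (p x + q x)) ∂μ := by
  rw [← integral_add hint₁ hint₂, ← integral_add hint₃ hint₄]
  apply integral_mono_ae (hint₁.add hint₂) (hint₃.add hint₄)
  filter_upwards [hpq, hD01] with x hx ⟨hx1, hx2⟩
  exact optimal_disc_pointwise (p x) (q x) (D x) (hp0 x) (hq0 x) hx hx1 hx2
end

section
/- Let (α, 𝒜, μ) be a σ-finite measure space and let p, q : α → ℝ be measurable functions with p ≥ 0, q ≥ 0, p(x) + q(x) > 0 for μ-almost every x, ∫ p dμ = 1 and ∫ q dμ = 1. Assume the functions p·log(p/(p+q)), q·log(q/(p+q)), p·log(2p/(p+q)), and q·log(2q/(p+q)) are μ-integrable (with the convention that p(x)·log of a ratio is 0 whenever p(x) = 0, and similarly for q). Define J := (1/2) ∫ p(x) log(2p(x)/(p(x)+q(x))) dμ(x) + (1/2) ∫ q(x) log(2q(x)/(p(x)+q(x))) dμ(x). Then: (i) ∫ p(x) log(p(x)/(p(x)+q(x)))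 dμ(x) + ∫ q(x) log(q(x)/(p(x)+q(x))) dμ(x) = −log 4 + 2·J; (ii) J ≥ 0; and (iii) J = 0 if and only if p(x) = q(x) for μ-almost every x. -/
open MeasureTheory Real

lemma jsd_aux_le (a b : ℝ) (ha : 0 ≤ a) (hb : 0 < b) :
    a - b ≤ a * Real.log (a / b) := by
  rcases ha.eq_or_lt with h | h
  · simp [← h]; linarith
  · have hlog : Real.log (b / a) ≤ b / a - 1 :=
      Real.log_le_sub_one_of_pos (div_pos hb h)
    have h2 : Real.log (a / b) = - Real.log (b / a) := by
      rw [← Real.log_inv, inv_div]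
    have hab : a * (b / a) = b := by field_simp
    rw [h2]
    nlinarith [mul_le_mul_of_nonneg_left hlog h.le]

lemma jsd_aux_lt (a b : ℝ) (ha : 0 ≤ a) (hb : 0 < b) (hne : a ≠ b) :
    a - b < a * Real.log (a / b) := by
  rcases ha.eq_or_lt with h | h
  · simp [← h]; linarith
  · have hba : b / a ≠ 1 := by
      intro hh
      apply hne
      field_simp at hh
      linarith
    have hlog : Real.log (b / a) < b / a - 1 :=
      Real.log_lt_sub_one_of_pos (div_pos hb h) hba
    have h2 : Real.log (a / b) = - Real.log (b / a) := by
      rw [← Real.log_inv, inv_div]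
    have hab : a * (b / a) = b := by field_simp
    rw [h2]
    nlinarith [mul_lt_mul_of_pos_left hlog h]

lemma jsd_pointwise_nonneg (a c : ℝ) (ha : 0 ≤ a) (hc : 0 ≤ c) (hs : 0 < a + c) :
    0 ≤ a * Real.log (2 * a / (a + c)) + c * Real.log (2 * c / (a + c)) := by
  have hb : 0 < (a + c) / 2 := by linarith
  have e1 : 2 * a / (a + c) = a / ((a + c) / 2) := by field_simp
  have e2 : 2 * c / (a + c) = c / ((a + c) / 2) := by field_simp
  have h1 := jsd_aux_le a ((a + c) / 2) ha hb
  have h2 := jsd_aux_le c ((a + c) / 2) hc hb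
  rw [e1, e2]
  linarith

lemma jsd_pointwise_pos (a c : ℝ) (ha : 0 ≤ a) (hc : 0 ≤ c) (hs : 0 < a + c)
    (hne : a ≠ c) :
    0 < a * Real.log (2 * a / (a + c)) + c * Real.log (2 * c / (a + c)) := by
  have hb : 0 < (a + c) / 2 := by linarith
  have e1 : 2 * a / (a + c) = a / ((a + c) / 2) := by field_simp
  have e2 : 2 * c / (a + c) = c / ((a + c) / 2) := by field_simp
  rw [e1, e2]
  have hab : a ≠ (a + c) / 2 := by intro h; apply hne; linarith [h]
  have hcb : c ≠ (a + c) / 2 := by intro h; apply hne; linarith [h]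
  have h1 := jsd_aux_lt a ((a + c) / 2) ha hb hab
  have h2 := jsd_aux_lt c ((a + c) / 2) hc hb hcb
  linarith

theorem optimal_value_jensen_shannon
    {α : Type*} [MeasurableSpace α] (μ : Measure α) [SigmaFinite μ]
    (p q : α → ℝ)
    (hp : Measurable p) (hq : Measurable q)
    (hp0 : ∀ x, 0 ≤ p x) (hq0 : ∀ x, 0 ≤ q x)
    (hpq : ∀ᵐ x ∂μ, 0 < p x + q x)
    (hpi : Integrable p μ) (hqi : Integrable q μ)
    (hp1 : ∫ x, p x ∂μ = 1) (hq1 : ∫ x, q x ∂μ = 1)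
    (hint₁ : Integrable (fun x => p x * Real.log (p x / (p x + q x))) μ)
    (hint₂ : Integrable (fun x => q x * Real.log (q x / (p x + q x))) μ)
    (hint₃ : Integrable (fun x => p x * Real.log (2 * p x / (p x + q x))) μ)
    (hint₄ : Integrable (fun x => q x * Real.log (2 * q x / (p x + q x))) μ)
    (J : ℝ)
    (hJ : J = (1 / 2) * (∫ x, p x * Real.log (2 * p x / (p x + q x)) ∂μ)
        + (1 / 2) * ∫ x, q x * Real.log (2 * q x / (p x + q x)) ∂μ) :
    ((∫ x, p x * Real.log (p x / (p x + q x)) ∂μ)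
        + ∫ x, q x * Real.log (q x / (p x + q x)) ∂μ
      = -Real.log 4 + 2 * J) ∧
    0 ≤ J ∧
    (J = 0 ↔ p =ᵐ[μ] q) := by
  -- pointwise split of log (2a/(a+c))
  have split : ∀ (a c : ℝ), 0 ≤ a → 0 ≤ c →
      a * Real.log (2 * a / (a + c)) = Real.log 2 * a + a * Real.log (a / (a + c)) := by
    intro a c ha hc
    rcases ha.eq_or_lt with h | h
    · simp [← h]
    · have hs : 0 < a + c := by linarith
      have hd : a / (a + c) ≠ 0 := ne_of_gt (div_pos h hs)
      have : 2 * a / (a + c) = 2 * (a / (a + c)) := by ring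
      rw [this, Real.log_mul two_ne_zero hd]
      ring
  have e3 : (∫ x, p x * Real.log (2 * p x / (p x + q x)) ∂μ)
      = Real.log 2 + ∫ x, p x * Real.log (p x / (p x + q x)) ∂μ := by
    have : (∫ x, p x * Real.log (2 * p x / (p x + q x)) ∂μ)
        = ∫ x, (Real.log 2 * p x + p x * Real.log (p x / (p x + q x))) ∂μ :=
      integral_congr_ae (Filter.Eventually.of_forall fun x =>
        split (p x) (q x) (hp0 x) (hq0 x))
    rw [this, integral_add (hpi.const_mul _) hint₁, integral_const_mul, hp1, mul_one]
  have e4 : (∫ x, q x * Real.log (2 * q x / (p x + q x)) ∂μ)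
      = Real.log 2 + ∫ x, q x * Real.log (q x / (p x + q x)) ∂μ := by
    have : (∫ x, q x * Real.log (2 * q x / (p x + q x)) ∂μ)
        = ∫ x, (Real.log 2 * q x + q x * Real.log (q x / (p x + q x))) ∂μ := by
      refine integral_congr_ae (Filter.Eventually.of_forall fun x => ?_)
      have := split (q x) (p x) (hq0 x) (hp0 x)
      rwa [add_comm (q x) (p x)] at this
    rw [this, integral_add (hqi.const_mul _) hint₂, integral_const_mul, hq1, mul_one]
  have hlog4 : Real.log 4 = 2 * Real.log 2 := by
    have : (4 : ℝ) = 2 ^ 2 := by norm_num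
    rw [this, Real.log_pow]; push_cast; ring
  -- the combined integrand
  set g : α → ℝ := fun x =>
    p x * Real.log (2 * p x / (p x + q x)) + q x * Real.log (2 * q x / (p x + q x)) with hg
  have hgint : Integrable g μ := hint₃.add hint₄
  have hg0 : ∀ᵐ x ∂μ, 0 ≤ g x := by
    filter_upwards [hpq] with x hx
    exact jsd_pointwise_nonneg (p x) (q x) (hp0 x) (hq0 x) hx
  have hJg : J = (1 / 2) * ∫ x, g x ∂μ := by
    rw [hJ, hg, integral_add hint₃ hint₄]; ring
  have hintg0 : 0 ≤ ∫ x, g x ∂μ := integral_nonneg_of_ae hg0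
  refine ⟨by rw [hJ, e3, e4, hlog4]; ring, by rw [hJg]; linarith, ?_⟩
  constructor
  · intro hJ0
    have hg_int0 : ∫ x, g x ∂μ = 0 := by rw [hJg] at hJ0; linarith
    have hgz : g =ᵐ[μ] 0 :=
      (integral_eq_zero_iff_of_nonneg_ae hg0 hgint).mp hg_int0
    filter_upwards [hpq, hgz] with x hx hgx
    by_contra hne
    have := jsd_pointwise_pos (p x) (q x) (hp0 x) (hq0 x) hx hne
    rw [hg] at hgx
    simp only [Pi.zero_apply] at hgx
    rw [hgx] at this
    exact lt_irrefl 0 this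
  · intro hpqe
    have hgz : g =ᵐ[μ] 0 := by
      filter_upwards [hpq, hpqe] with x hx hxe
      have hpx : 0 < p x := by
        rcases (hp0 x).eq_or_lt with h | h
        · exfalso; rw [hxe] at hx; rw [← hxe, ← h] at hx; simp at hx
        · exact h
      have h1 : 2 * p x / (p x + q x) = 1 := by rw [← hxe]; field_simp; ring
      have h2 : 2 * q x / (p x + q x) = 1 := by rw [← hxe] at hx ⊢; field_simp; ring
      show p x * Real.log (2 * p x / (p x + q x))
          + q x * Real.log (2 * q x / (p x + q x)) = 0
      rw [h1, h2, Real.log_one, mul_zero, mul_zero, add_zero]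
    have : ∫ x, g x ∂μ = 0 := by
      rw [integral_congr_ae hgz]
      simp
    rw [hJg, this, mul_zero]
end

section
/- Let P and Q be probability measures on a measurable space α, and let M := (1/2) • (P + Q). Then P ≪ M, Q ≪ M, and klDiv P M + klDiv Q M = 0 if and only if P = Q, where klDiv denotes the Kullback–Leibler divergence between measures. -/
open MeasureTheory
open scoped ENNReal

-- The Kullback–Leibler divergence between two measures: `∫ log (dP/dM) dP` when `P ≪ M`
-- and the log-likelihood ratio is `P`-integrable, and `+∞` otherwise.
open Classical in
noncomputable def klDiv {α : Type*} [MeasurableSpace α] (P M : Measure α) : EReal :=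
  if P ≪ M ∧ Integrable (fun x => Real.log (P.rnDeriv M x).toReal) P
  then ((∫ x, Real.log (P.rnDeriv M x).toReal ∂P : ℝ) : EReal)
  else ⊤

/-- Pointwise inequality: `x - 1 ≤ x * log x` for `x ≥ 0` (with `0 * log 0 = 0`). -/
lemma aux_nonneg {x : ℝ} (hx : 0 ≤ x) : 0 ≤ x * Real.log x - (x - 1) := by
  rcases eq_or_lt_of_le hx with h0 | h0
  · simp [← h0]
  · have h := Real.log_le_sub_one_of_pos (x := 1 / x) (by positivity)
    rw [Real.log_div one_ne_zero h0.ne', Real.log_one] at h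
    nlinarith [mul_le_mul_of_nonneg_left h (le_of_lt h0),
      mul_one_div_cancel h0.ne']

/-- Strict version: equality forces `x = 1`. -/
lemma aux_eq_one {x : ℝ} (hx : 0 ≤ x) (h : x * Real.log x - (x - 1) = 0) : x = 1 := by
  rcases eq_or_lt_of_le hx with h0 | h0
  · exfalso; rw [← h0] at h; norm_num at h
  · by_contra hne
    have h1 : (1 : ℝ) / x ≠ 1 := by
      simp only [ne_eq, div_eq_one_iff_eq h0.ne']
      exact fun hh => hne hh.symm
    have hlt := Real.log_lt_sub_one_of_pos (x := 1 / x) (by positivity) h1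
    rw [Real.log_div one_ne_zero h0.ne', Real.log_one] at hlt
    nlinarith [mul_lt_mul_of_pos_left hlt h0, mul_one_div_cancel h0.ne']

section Gibbs

variable {α : Type*} [MeasurableSpace α] {P M : Measure α}
  [IsProbabilityMeasure P] [IsProbabilityMeasure M]

/-- The nonnegative integrand for the Gibbs inequality. -/
noncomputable def gibbsFn (P M : Measure α) (x : α) : ℝ :=
  (P.rnDeriv M x).toReal * Real.log (P.rnDeriv M x).toReal
    - ((P.rnDeriv M x).toReal - 1)

lemma gibbs_core (hPM : P ≪ M)
    (hInt : Integrable (fun x => Real.log (P.rnDeriv M x).toReal) P) :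
    Integrable (gibbsFn P M) M ∧
    ∫ x, gibbsFn P M x ∂M = ∫ x, Real.log (P.rnDeriv M x).toReal ∂P := by
  have hInt1 : Integrable (fun x => (P.rnDeriv M x).toReal *
      Real.log (P.rnDeriv M x).toReal) M := by
    have := (integrable_rnDeriv_smul_iff hPM
      (f := fun x => Real.log (P.rnDeriv M x).toReal)).mpr hInt
    simpa [smul_eq_mul] using this
  have hInt2 : Integrable (fun x => (P.rnDeriv M x).toReal - 1) M :=
    Measure.integrable_toReal_rnDeriv.sub (integrable_const 1)
  refine ⟨hInt1.sub hInt2, ?_⟩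
  have hI1 : ∫ x, (P.rnDeriv M x).toReal * Real.log (P.rnDeriv M x).toReal ∂M
      = ∫ x, Real.log (P.rnDeriv M x).toReal ∂P := by
    have := integral_rnDeriv_smul hPM
      (f := fun x => Real.log (P.rnDeriv M x).toReal)
    simpa [smul_eq_mul] using this
  have hI2 : ∫ x, ((P.rnDeriv M x).toReal - 1) ∂M = 0 := by
    rw [integral_sub Measure.integrable_toReal_rnDeriv (integrable_const 1),
      Measure.integral_toReal_rnDeriv hPM]
    simp
  simp only [gibbsFn]
  rw [integral_sub hInt1 hInt2, hI1, hI2, sub_zero]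

/-- Gibbs inequality: the KL integral is nonnegative. -/
lemma gibbs_nonneg (hPM : P ≪ M)
    (hInt : Integrable (fun x => Real.log (P.rnDeriv M x).toReal) P) :
    0 ≤ ∫ x, Real.log (P.rnDeriv M x).toReal ∂P := by
  obtain ⟨_, hEq⟩ := gibbs_core hPM hInt
  rw [← hEq]
  exact integral_nonneg fun x => aux_nonneg ENNReal.toReal_nonneg

/-- Equality case of the Gibbs inequality. -/
lemma gibbs_eq_zero (hPM : P ≪ M)
    (hInt : Integrable (fun x => Real.log (P.rnDeriv M x).toReal) P)
    (hZ : ∫ x, Real.log (P.rnDeriv M x).toReal ∂P = 0) : P = M := by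
  obtain ⟨hIntg, hEq⟩ := gibbs_core hPM hInt
  have hZero : ∫ x, gibbsFn P M x ∂M = 0 := by rw [hEq, hZ]
  have hae : gibbsFn P M =ᵐ[M] 0 :=
    (integral_eq_zero_iff_of_nonneg
      (fun x => aux_nonneg ENNReal.toReal_nonneg) hIntg).mp hZero
  have hone : P.rnDeriv M =ᵐ[M] fun _ => 1 := by
    filter_upwards [hae, Measure.rnDeriv_lt_top P M] with x hx hlt
    have h1 : (P.rnDeriv M x).toReal = 1 :=
      aux_eq_one ENNReal.toReal_nonneg hx
    rwa [ENNReal.toReal_eq_one_iff] at h1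
  calc P = M.withDensity (P.rnDeriv M) := (Measure.withDensity_rnDeriv_eq P M hPM).symm
    _ = M.withDensity (fun _ => 1) := withDensity_congr_ae hone
    _ = M := by simp

end Gibbs

theorem jensen_shannon_eq_zero_iff
    {α : Type*} [MeasurableSpace α] (P Q : Measure α)
    [IsProbabilityMeasure P] [IsProbabilityMeasure Q]
    (M : Measure α) (hM : M = (1 / 2 : ℝ≥0∞) • (P + Q)) :
    P ≪ M ∧ Q ≪ M ∧ (klDiv P M + klDiv Q M = 0 ↔ P = Q) := by
  have hMeq : ∀ s, M s = 1 / 2 * (P s + Q s) := by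
    intro s; rw [hM]
    simp [Measure.smul_apply, Measure.add_apply, smul_eq_mul, mul_add]
  have hPM : P ≪ M := by
    refine Measure.AbsolutelyContinuous.mk fun s _ hs => ?_
    have := hMeq s
    rw [hs] at this
    have h2 : P s + Q s = 0 := by
      by_contra h
      rw [eq_comm, mul_eq_zero] at this
      rcases this with h' | h'
      · norm_num at h'
      · exact h h'
    exact (add_eq_zero.mp h2).1
  have hQM : Q ≪ M := by
    refine Measure.AbsolutelyContinuous.mk fun s _ hs => ?_
    have := hMeq s
    rw [hs] at this
    have h2 : P s + Q s = 0 := by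
      by_contra h
      rw [eq_comm, mul_eq_zero] at this
      rcases this with h' | h'
      · norm_num at h'
      · exact h h'
    exact (add_eq_zero.mp h2).2
  have hMprob : IsProbabilityMeasure M := by
    constructor
    rw [hMeq, measure_univ, measure_univ, one_add_one_eq_two, one_div,
      ENNReal.inv_mul_cancel two_ne_zero ENNReal.ofNat_ne_top]
  refine ⟨hPM, hQM, ?_, ?_⟩
  · -- forward direction
    intro hsum
    classical
    by_cases hP : P ≪ M ∧ Integrable (fun x => Real.log (P.rnDeriv M x).toReal) P
    · by_cases hQ : Q ≪ M ∧ Integrable (fun x => Real.log (Q.rnDeriv M x).toReal) Q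
      · rw [klDiv, klDiv, if_pos hP, if_pos hQ, ← EReal.coe_add] at hsum
        have hab : (∫ x, Real.log (P.rnDeriv M x).toReal ∂P)
            + (∫ x, Real.log (Q.rnDeriv M x).toReal ∂Q) = 0 := by
          exact_mod_cast hsum
        have ha := gibbs_nonneg hPM hP.2
        have hb := gibbs_nonneg hQM hQ.2
        have hP0 : ∫ x, Real.log (P.rnDeriv M x).toReal ∂P = 0 := by linarith
        have hQ0 : ∫ x, Real.log (Q.rnDeriv M x).toReal ∂Q = 0 := by linarith
        rw [gibbs_eq_zero hPM hP.2 hP0, gibbs_eq_zero hQM hQ.2 hQ0]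
      · rw [klDiv, klDiv, if_neg hQ] at hsum
        exfalso
        split_ifs at hsum <;> simp [EReal.coe_add_top, EReal.top_add_top] at hsum
    · rw [klDiv, klDiv, if_neg hP] at hsum
      exfalso
      split_ifs at hsum <;> simp [EReal.top_add_coe, EReal.top_add_top] at hsum
  · -- backward direction
    intro hPQ
    have hMP : M = P := by
      ext s hs
      rw [hMeq s, ← hPQ, ← two_mul, ← mul_assoc, one_div,
        ENNReal.inv_mul_cancel two_ne_zero ENNReal.ofNat_ne_top, one_mul]
    rw [← hPQ, hMP]
    have hself : (fun x => Real.log (P.rnDeriv P x).toReal) =ᵐ[P] fun _ => 0 := by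
      filter_upwards [Measure.rnDeriv_self P] with x hx
      simp [hx]
    have hInt : Integrable (fun x => Real.log (P.rnDeriv P x).toReal) P :=
      (integrable_const (0 : ℝ)).congr hself.symm
    have hIz : ∫ x, Real.log (P.rnDeriv P x).toReal ∂P = 0 := by
      rw [integral_congr_ae hself]; simp
    rw [klDiv, if_pos ⟨Measure.AbsolutelyContinuous.refl P, hInt⟩, hIz]
    norm_num
end

section
/- Let E and F be measurable spaces, let ν be a probability measure on E, and let κ, η be Markov kernels from E to F. For each x ∈ E let m(x) := (1/2) • (κ(x) + η(x)). Let D : E × F → ℝ be measurable with 0 < D(x, y) < 1 for all (x, y). Assume log(D) is integrable with respect to the composition-product measure ν ⊗ₘ κ, log(1 − D) is integrable with respect to ν ⊗ₘ η, and the function x ↦ (klDiv (κ x) (m x)).toReal + (klDiv (η x) (m x)).toReal is measurable and ν-integrable. Then ∫ log D d(ν ⊗ₘ κ) + ∫ log(1 − D) d(ν ⊗ₘ η) ≤ −log 4 + ∫ ((klDiv (κ x) (m x)).toReal + (klDiv (η x) (m x)).toReal) dν(x). -/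
open MeasureTheory ProbabilityTheory
open scoped ENNReal

/-! Pass to the mixture `M = (P + Q) / 2`, against which `P` and `Q` have densities `p, q`
with `p + q = 2`. By Gibbs' inequality `a log (s / a) ≤ s - a`, the integrand
`p log D + q log (1 - D)` is at most its value at the optimal discriminator `D = p / 2`, namely
`p log p + q log q - log 4`, whose `M`-integral is `KL(P ‖ M) + KL(Q ‖ M) - log 4`.
Applying this on every fibre of the kernels and integrating over `ν` gives the bound. -/

namespace Real

lemma mul_log_le_mul_log_add_sub {a s : ℝ} (ha : 0 ≤ a) (hs : 0 < s) :
    a * log s ≤ a * log a + s - a := by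
  rcases ha.eq_or_lt with rfl | ha
  · simpa using hs.le
  have h := mul_le_mul_of_nonneg_left (log_le_sub_one_of_pos (div_pos hs ha)) ha.le
  rw [log_div hs.ne' ha.ne', mul_sub, mul_sub, mul_div_cancel₀ _ ha.ne'] at h
  linarith

lemma mul_log_add_mul_log_one_sub_le {a b t : ℝ} (ha : 0 ≤ a) (hb : 0 ≤ b) (hab : a + b = 2)
    (ht₀ : 0 < t) (ht₁ : t < 1) :
    a * log t + b * log (1 - t) ≤ a * log a + b * log b - log 4 := by
  have hta := mul_log_le_mul_log_add_sub ha (by positivity : 0 < 2 * t)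
  have htb := mul_log_le_mul_log_add_sub hb (by linarith : 0 < 2 * (1 - t))
  rw [log_mul two_ne_zero ht₀.ne'] at hta
  rw [log_mul two_ne_zero (by linarith)] at htb
  have hlog4 : log 4 = (a + b) * log 2 := by
    rw [hab, show (4 : ℝ) = 2 ^ 2 by norm_num, log_pow]; push_cast; ring
  nlinarith

end Real

namespace MeasureTheory

variable {α : Type*} [MeasurableSpace α]

lemma Integrable.continuous_comp_of_ae_abs_le {μ : Measure α} [IsFiniteMeasure μ] {g : ℝ → ℝ}
    (hg : Continuous g) {f : α → ℝ} (hf : AEStronglyMeasurable f μ) {C : ℝ}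
    (hfC : ∀ᵐ y ∂μ, |f y| ≤ C) : Integrable (fun y => g (f y)) μ := by
  obtain ⟨B, hB⟩ :=
    (isCompact_Icc (a := -C) (b := C)).exists_bound_of_continuousOn hg.continuousOn
  refine Integrable.of_bound (hg.comp_aestronglyMeasurable hf) B ?_
  filter_upwards [hfC] with y hy
  exact hB _ (abs_le.mp hy)

lemma toReal_klDiv_eq_integral_mul_log {P M : Measure α} [SigmaFinite P]
    [P.HaveLebesgueDecomposition M] (hPM : P ≪ M)
    (h : Integrable (fun y => (P.rnDeriv M y).toReal * Real.log (P.rnDeriv M y).toReal) M) :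
    (klDiv P M).toReal = ∫ y, (P.rnDeriv M y).toReal * Real.log (P.rnDeriv M y).toReal ∂M := by
  rw [klDiv, if_pos ⟨hPM, (integrable_rnDeriv_mul_log_iff hPM).mp h⟩, EReal.toReal_coe,
    integral_rnDeriv_mul_log hPM, llr_def]

section Mixture

variable (P Q : Measure α)

lemma absolutelyContinuous_half_smul_add_left : P ≪ (1 / 2 : ℝ≥0∞) • (P + Q) :=
  (Measure.absolutelyContinuous_of_le (Measure.le_add_right le_rfl)).trans
    (Measure.absolutelyContinuous_smul (by norm_num))

lemma two_smul_half_smul_add : (2 : ℝ≥0∞) • (1 / 2 : ℝ≥0∞) • (P + Q) = P + Q := by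
  rw [smul_smul, ENNReal.mul_div_cancel two_ne_zero ENNReal.ofNat_ne_top, one_smul]

instance [IsFiniteMeasure P] [IsFiniteMeasure Q] : IsFiniteMeasure ((1 / 2 : ℝ≥0∞) • (P + Q)) :=
  (P + Q).smul_finite (by norm_num)

instance [IsProbabilityMeasure P] [IsProbabilityMeasure Q] :
    IsProbabilityMeasure ((1 / 2 : ℝ≥0∞) • (P + Q)) := by
  constructor
  rw [Measure.smul_apply, Measure.add_apply, measure_univ, measure_univ, one_add_one_eq_two,
    smul_eq_mul, one_div, ENNReal.inv_mul_cancel two_ne_zero ENNReal.ofNat_ne_top]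

lemma ae_toReal_rnDeriv_add_toReal_rnDeriv_half_smul_add [IsFiniteMeasure P] [IsFiniteMeasure Q] :
    ∀ᵐ y ∂(1 / 2 : ℝ≥0∞) • (P + Q), (P.rnDeriv ((1 / 2 : ℝ≥0∞) • (P + Q)) y).toReal
      + (Q.rnDeriv ((1 / 2 : ℝ≥0∞) • (P + Q)) y).toReal = 2 := by
  set M := (1 / 2 : ℝ≥0∞) • (P + Q)
  filter_upwards [Measure.rnDeriv_add P Q M, Measure.rnDeriv_smul_left_of_ne_top M M
    (r := 2) ENNReal.ofNat_ne_top, Measure.rnDeriv_self M, Measure.rnDeriv_lt_top P M,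
    Measure.rnDeriv_lt_top Q M] with y hadd hsmul hself hP hQ
  rw [two_smul_half_smul_add] at hsmul
  rw [← ENNReal.toReal_add hP.ne hQ.ne, ← Pi.add_apply, ← hadd, hsmul]
  simp [hself]

lemma integrable_toReal_rnDeriv_mul_log_half_smul_add [IsFiniteMeasure P] [IsFiniteMeasure Q] :
    Integrable (fun y => (P.rnDeriv ((1 / 2 : ℝ≥0∞) • (P + Q)) y).toReal
      * Real.log (P.rnDeriv ((1 / 2 : ℝ≥0∞) • (P + Q)) y).toReal) ((1 / 2 : ℝ≥0∞) • (P + Q)) := by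
  refine Integrable.continuous_comp_of_ae_abs_le Real.continuous_mul_log
    (Measure.measurable_rnDeriv _ _).ennreal_toReal.aestronglyMeasurable (C := 2) ?_
  filter_upwards [ae_toReal_rnDeriv_add_toReal_rnDeriv_half_smul_add P Q] with y hy
  rw [abs_of_nonneg ENNReal.toReal_nonneg]
  linarith [ENNReal.toReal_nonneg (a := Q.rnDeriv ((1 / 2 : ℝ≥0∞) • (P + Q)) y)]

lemma integral_log_add_integral_log_one_sub_le [IsProbabilityMeasure P] [IsProbabilityMeasure Q]
    {d : α → ℝ} (hd : ∀ y, 0 < d y ∧ d y < 1)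
    (hP : Integrable (fun y => Real.log (d y)) P)
    (hQ : Integrable (fun y => Real.log (1 - d y)) Q) :
    ∫ y, Real.log (d y) ∂P + ∫ y, Real.log (1 - d y) ∂Q ≤
      -Real.log 4 + ((klDiv P ((1 / 2 : ℝ≥0∞) • (P + Q))).toReal
        + (klDiv Q ((1 / 2 : ℝ≥0∞) • (P + Q))).toReal) := by
  set M := (1 / 2 : ℝ≥0∞) • (P + Q)
  set p := fun y => (P.rnDeriv M y).toReal
  set q := fun y => (Q.rnDeriv M y).toReal
  have hPM : P ≪ M := absolutelyContinuous_half_smul_add_left P Q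
  have hQM : Q ≪ M := by
    simpa only [M, add_comm Q P] using absolutelyContinuous_half_smul_add_left Q P
  have hp : Integrable (fun y => p y * Real.log (p y)) M :=
    integrable_toReal_rnDeriv_mul_log_half_smul_add P Q
  have hq : Integrable (fun y => q y * Real.log (q y)) M := by
    simpa only [q, M, add_comm Q P] using integrable_toReal_rnDeriv_mul_log_half_smul_add Q P
  have hpq : Integrable (fun y => p y * Real.log (p y) + q y * Real.log (q y)) M := hp.add hq
  have hpd : Integrable (fun y => p y * Real.log (d y)) M :=
    (integrable_rnDeriv_smul_iff hPM).mpr hP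
  have hqd : Integrable (fun y => q y * Real.log (1 - d y)) M :=
    (integrable_rnDeriv_smul_iff hQM).mpr hQ
  have hpointwise : ∀ᵐ y ∂M, p y * Real.log (d y) + q y * Real.log (1 - d y) ≤
      p y * Real.log (p y) + q y * Real.log (q y) - Real.log 4 := by
    filter_upwards [ae_toReal_rnDeriv_add_toReal_rnDeriv_half_smul_add P Q] with y hy
    exact Real.mul_log_add_mul_log_one_sub_le ENNReal.toReal_nonneg ENNReal.toReal_nonneg hy
      (hd y).1 (hd y).2
  calc ∫ y, Real.log (d y) ∂P + ∫ y, Real.log (1 - d y) ∂Q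
      = ∫ y, (p y * Real.log (d y) + q y * Real.log (1 - d y)) ∂M := by
        rw [integral_add hpd hqd]
        exact congrArg₂ (· + ·) (integral_rnDeriv_smul hPM).symm (integral_rnDeriv_smul hQM).symm
    _ ≤ ∫ y, (p y * Real.log (p y) + q y * Real.log (q y) - Real.log 4) ∂M :=
        integral_mono_ae (hpd.add hqd) (hpq.sub (integrable_const _)) hpointwise
    _ = _ := by
        rw [integral_sub hpq (integrable_const _), integral_add hp hq, integral_const,
          toReal_klDiv_eq_integral_mul_log hPM hp, toReal_klDiv_eq_integral_mul_log hQM hq]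
        simp only [probReal_univ, one_smul]
        ring

end Mixture

lemma Integrable.integral_measure_compProd {β E : Type*}
    [MeasurableSpace β] [NormedAddCommGroup E] [NormedSpace ℝ E] {μ : Measure α} [SFinite μ]
    {κ : Kernel α β} [IsSFiniteKernel κ] {f : α × β → E} (hf : Integrable f (μ ⊗ₘ κ)) :
    Integrable (fun x => ∫ y, f (x, y) ∂κ x) μ := by
  simpa using Integrable.integral_compProd (κ := Kernel.const Unit μ) (a := ()) hf

end MeasureTheory

theorem conditional_gan_value_le_general
    {E F : Type*} [MeasurableSpace E] [MeasurableSpace F]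
    (ν : Measure E) [IsProbabilityMeasure ν]
    (κ η : Kernel E F) [IsMarkovKernel κ] [IsMarkovKernel η]
    (m : E → Measure F) (hm : ∀ x, m x = (1 / 2 : ℝ≥0∞) • (κ x + η x))
    (D : E × F → ℝ)
    (hD01 : ∀ p : E × F, 0 < D p ∧ D p < 1)
    (hintD : Integrable (fun p => Real.log (D p)) (ν ⊗ₘ κ))
    (hintD' : Integrable (fun p => Real.log (1 - D p)) (ν ⊗ₘ η))
    (hint : Integrable (fun x =>
      (klDiv (κ x) (m x)).toReal + (klDiv (η x) (m x)).toReal) ν) :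
    (∫ p, Real.log (D p) ∂(ν ⊗ₘ κ)) + ∫ p, Real.log (1 - D p) ∂(ν ⊗ₘ η) ≤
      -Real.log 4 +
        ∫ x, ((klDiv (κ x) (m x)).toReal + (klDiv (η x) (m x)).toReal) ∂ν := by
  have hκ := hintD.integral_measure_compProd
  have hη := hintD'.integral_measure_compProd
  have hfiber : ∀ᵐ x ∂ν,
      (∫ y, Real.log (D (x, y)) ∂κ x) + ∫ y, Real.log (1 - D (x, y)) ∂η x ≤
        -Real.log 4 + ((klDiv (κ x) (m x)).toReal + (klDiv (η x) (m x)).toReal) := by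
    filter_upwards [((Measure.integrable_compProd_iff hintD.1).mp hintD).1,
      ((Measure.integrable_compProd_iff hintD'.1).mp hintD').1] with x hκx hηx
    rw [hm x]
    exact integral_log_add_integral_log_one_sub_le (κ x) (η x) (fun y => hD01 (x, y)) hκx hηx
  calc (∫ p, Real.log (D p) ∂(ν ⊗ₘ κ)) + ∫ p, Real.log (1 - D p) ∂(ν ⊗ₘ η)
      = ∫ x, ((∫ y, Real.log (D (x, y)) ∂κ x) + ∫ y, Real.log (1 - D (x, y)) ∂η x) ∂ν := by
        rw [Measure.integral_compProd hintD, Measure.integral_compProd hintD', integral_add hκ hη]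
    _ ≤ ∫ x, (-Real.log 4 + ((klDiv (κ x) (m x)).toReal + (klDiv (η x) (m x)).toReal)) ∂ν :=
        integral_mono_ae (hκ.add hη) ((integrable_const _).add hint) hfiber
    _ = _ := by simp [integral_add (integrable_const _) hint]

theorem conditional_gan_value_le
    {E F : Type*} [MeasurableSpace E] [MeasurableSpace F]
    (ν : Measure E) [IsProbabilityMeasure ν]
    (κ η : Kernel E F) [IsMarkovKernel κ] [IsMarkovKernel η]
    (m : E → Measure F) (hm : ∀ x, m x = (1 / 2 : ℝ≥0∞) • (κ x + η x))
    (D : E × F → ℝ) (hD : Measurable D)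
    (hD01 : ∀ p : E × F, 0 < D p ∧ D p < 1)
    (hintD : Integrable (fun p => Real.log (D p)) (ν ⊗ₘ κ))
    (hintD' : Integrable (fun p => Real.log (1 - D p)) (ν ⊗ₘ η))
    (hmeas : Measurable fun x =>
      (klDiv (κ x) (m x)).toReal + (klDiv (η x) (m x)).toReal)
    (hint : Integrable (fun x =>
      (klDiv (κ x) (m x)).toReal + (klDiv (η x) (m x)).toReal) ν) :
    (∫ p, Real.log (D p) ∂(ν ⊗ₘ κ)) + ∫ p, Real.log (1 - D p) ∂(ν ⊗ₘ η) ≤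
      -Real.log 4 +
        ∫ x, ((klDiv (κ x) (m x)).toReal + (klDiv (η x) (m x)).toReal) ∂ν :=
  conditional_gan_value_le_general ν κ η m hm D hD01 hintD hintD' hint
end
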